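/- Let α be an automorphism of a finite abelian group V and let k be a positive integer. Then the minimal left Engel sink of α^k on V is contained in the minimal left Engel sink of α: 𝓛(α^k) ⊆ 𝓛(α). -/
import Mathlib


/-- Iterated Engel commutator `[u, _n α]` with `[u, α] = u⁻¹ u^α`. -/
def lEngelAut {G : Type} [Group G] (α : MulAut G) : G → ℕ → G
  | u, 0 => u
  | u, n + 1 => (lEngelAut α u n)⁻¹ * α (lEngelAut α u n)

/-- A left Engel sink of `α`. -/
def IsLeftEngelSinkAut {G : Type} [Group G] (α : MulAut G) (L : Set G) : Prop :=
  ∀ u : G, ∃ N : ℕ, ∀ n ≥ N, lEngelAut α u n ∈ L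

/-- The minimal left Engel sink of `α`. -/
def IsMinLeftEngelSinkAut {G : Type} [Group G] (α : MulAut G) (L : Set G) : Prop :=
  IsLeftEngelSinkAut α L ∧ ∀ L' : Set G, IsLeftEngelSinkAut α L' → L ⊆ L'

private lemma lEngel_eq_iter {G : Type} [Group G] (α : MulAut G) (u : G) (n : ℕ) :
    lEngelAut α u n = (fun x => x⁻¹ * α x)^[n] u := by
  induction n with
  | zero => rfl
  | succ n ih => rw [lEngelAut, ih, Function.iterate_succ_apply']

private lemma mod_period {V : Type} (h : V → V) (u : V) (a p : ℕ) (hp : 0 < p)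
    (per : ∀ m, h^[a + m + p] u = h^[a + m] u) :
    ∀ m, h^[a + m] u = h^[a + m % p] u := by
  intro m
  induction m using Nat.strong_induction_on with
  | _ m ih =>
    by_cases hm : m < p
    · rw [Nat.mod_eq_of_lt hm]
    · push_neg at hm
      have h1 : m = (m - p) + p := (Nat.sub_add_cancel hm).symm
      have h2 : m % p = (m - p) % p := by
        conv_lhs => rw [h1]
        rw [Nat.add_mod_right]
      rw [h2, ← ih (m - p) (by omega)]
      conv_lhs => rw [h1, ← Nat.add_assoc]
      exact per (m - p)

/-- For an automorphism `α` of a finite abelian group `V` and `k ≥ 1`,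
`𝓛(α^k) ⊆ 𝓛(α)`. -/
theorem stmt8 (V : Type) [CommGroup V] [Finite V] (α : MulAut V) (k : ℕ) (hk : 0 < k)
    (L M : Set V) (hL : IsMinLeftEngelSinkAut (α ^ k) L)
    (hM : IsMinLeftEngelSinkAut α M) : L ⊆ M := by
  apply hL.2
  intro u
  set f : V → V := fun x => x⁻¹ * α x with hfdef
  set S : V → V := fun x => ∏ i ∈ Finset.range k, (α ^ i) x with hSdef
  have hSα : ∀ x, S (α x) = α (S x) := by
    intro x
    simp only [hSdef, map_prod]
    refine Finset.prod_congr rfl fun i _ => ?_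
    have : (α ^ i) (α x) = (α ^ i * α) x := rfl
    rw [this, ← pow_succ, pow_succ']
    rfl
  have hcomm : Function.Commute f S := by
    intro x
    simp only [Function.comp_apply, hfdef, hSdef, map_mul, map_inv]
    rw [Finset.prod_mul_distrib, Finset.prod_inv_distrib]
    congr 1
    have : (∏ i ∈ Finset.range k, (α ^ i) (α x)) = α (∏ i ∈ Finset.range k, (α ^ i) x) := by
      have := hSα x
      simpa [hSdef] using this
    exact this.symm
  have hfS : ∀ x, f (S x) = x⁻¹ * (α ^ k) x := by
    intro x
    simp only [hfdef, hSdef]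
    rw [show α (∏ i ∈ Finset.range k, (α ^ i) x) = ∏ i ∈ Finset.range k, (α ^ (i + 1)) x by
      rw [map_prod]; exact Finset.prod_congr rfl fun i _ => by
        rw [pow_succ']; rfl]
    rw [inv_mul_eq_div, ← Finset.prod_div_distrib]
    have := Finset.prod_range_div (fun i => (α ^ i) x) k
    simp only [this]
    simp [div_eq_inv_mul, mul_comm]
  have key : ∀ n, lEngelAut (α ^ k) u n = lEngelAut α (S^[n] u) n := by
    intro n
    rw [lEngel_eq_iter, lEngel_eq_iter]
    have h1 : (fun x => x⁻¹ * (α ^ k) x) = f ∘ S := by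
      funext x; exact (hfS x).symm
    rw [h1, hcomm.comp_iterate]
    rfl
  -- eventual periodicity of n ↦ S^[n] u
  obtain ⟨i, j, hne, heq⟩ := Finite.exists_ne_map_eq_of_infinite (fun n : ℕ => S^[n] u)
  obtain ⟨a, b, hab, heq⟩ : ∃ a b, a < b ∧ S^[a] u = S^[b] u := by
    rcases hne.lt_or_gt with h | h
    · exact ⟨i, j, h, heq⟩
    · exact ⟨j, i, h, heq.symm⟩
  set p := b - a with hpdef
  have hp : 0 < p := by omega
  have per : ∀ m, S^[a + m + p] u = S^[a + m] u := by
    intro m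
    have h1 : a + m + p = m + b := by omega
    have h2 : a + m = m + a := by omega
    rw [h1, h2, Function.iterate_add_apply, Function.iterate_add_apply, ← heq]
  have hmod := mod_period S u a p hp per
  choose N hN using hM.1
  refine ⟨max (a + p) ((Finset.range p).sup fun r => N (S^[a + r] u)), ?_⟩
  intro n hn
  have hna : a ≤ n := by
    have := le_of_max_le_left hn; omega
  have h1 : S^[n] u = S^[a + (n - a) % p] u := by
    have := hmod (n - a)
    rwa [Nat.add_sub_cancel' hna] at this
  rw [key, h1]
  have hr : (n - a) % p < p := Nat.mod_lt _ hp
  have hNle : N (S^[a + (n - a) % p] u) ≤ n :=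
    le_trans (Finset.le_sup (f := fun r => N (S^[a + r] u)) (Finset.mem_range.mpr hr))
      (le_of_max_le_right hn)
  exact hN _ n hNle
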